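/- Let P and Q be probability measures on ℝ^n with finite second moments, set μ_P := ∫ ξ dP, μ_Q := ∫ ξ dQ, Σ_P := ∫ ξξᵀ dP, Σ_Q := ∫ ξξᵀ dQ, and for γ ∈ [0,1] let P_γ := (1−γ)·P + γ·Q. For x ∈ ℝ^n define D_x(P,Q) := xᵀ(Σ_Q − Σ_P)x − 2·(xᵀμ_P)·(xᵀ(μ_Q − μ_P)). Suppose ‖μ_Q − μ_P‖₂ ≤ B_μ and x lies in the unit simplex Δ_n (x_i ≥ 0 for all i and Σ_i x_i = 1). Then D_x(P,P_γ) + D_x(P_γ,P) = 2·γ²·(xᵀ(μ_Q − μ_P))² ≤ 2·γ²·B_μ². -/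

import Mathlib

open MeasureTheory Filter Set
open scoped BigOperators

/-- The mixture `(1-γ)·P + γ·Q` of two measures. -/
noncomputable def mix {n : ℕ} (P Q : Measure (EuclideanSpace ℝ (Fin n))) (γ : ℝ) :
    Measure (EuclideanSpace ℝ (Fin n)) :=
  ENNReal.ofReal (1 - γ) • P + ENNReal.ofReal γ • Q

/-- The mean `μ_P = ∫ ξ dP`. -/
noncomputable def meanVec {n : ℕ} (P : Measure (EuclideanSpace ℝ (Fin n))) :
    EuclideanSpace ℝ (Fin n) :=
  ∫ ξ, ξ ∂P

/-- The second-moment matrix `Σ_P = ∫ ξξᵀ dP` (entrywise). -/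
noncomputable def secondMoment {n : ℕ} (P : Measure (EuclideanSpace ℝ (Fin n))) :
    Matrix (Fin n) (Fin n) ℝ :=
  Matrix.of fun i j => ∫ ξ, ξ i * ξ j ∂P

/-- The quadratic form `xᵀ A x`. -/
noncomputable def quadForm {n : ℕ} (A : Matrix (Fin n) (Fin n) ℝ)
    (x : EuclideanSpace ℝ (Fin n)) : ℝ :=
  ∑ i, ∑ j, x i * A i j * x j

/-- The G-derivative `D_x(P,Q) = xᵀ(Σ_Q − Σ_P)x − 2(xᵀμ_P)(xᵀ(μ_Q − μ_P))` of the
variance `V_x(P) = xᵀ(Σ_P − μ_Pμ_Pᵀ)x` at `P` in direction `Q`. -/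
noncomputable def varDeriv {n : ℕ} (x : EuclideanSpace ℝ (Fin n))
    (P Q : Measure (EuclideanSpace ℝ (Fin n))) : ℝ :=
  quadForm (secondMoment Q - secondMoment P) x -
    2 * (inner ℝ x (meanVec P) : ℝ) * (inner ℝ x (meanVec Q - meanVec P) : ℝ)

/-! The second moments enter `D_x(P, Q)` through `xᵀ(Σ_Q − Σ_P)x`, which changes sign when `P`
and `Q` are swapped, so `D_x(P, P') + D_x(P', P) = 2⟪x, μ_{P'} − μ_P⟫²` for any two measures.
For the mixture the mean moves by `γ(μ_Q − μ_P)`, and on the simplex `‖x‖₂ ≤ ‖x‖₁ = 1`, so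
Cauchy–Schwarz bounds `⟪x, μ_Q − μ_P⟫²` by `B_μ²`. -/

lemma quadForm_neg {n : ℕ} (A : Matrix (Fin n) (Fin n) ℝ) (x : EuclideanSpace ℝ (Fin n)) :
    quadForm (-A) x = -quadForm A x := by
  simp [quadForm]

lemma varDeriv_add_varDeriv_swap {n : ℕ} (x : EuclideanSpace ℝ (Fin n))
    (P Q : Measure (EuclideanSpace ℝ (Fin n))) :
    varDeriv x P Q + varDeriv x Q P = 2 * (inner ℝ x (meanVec Q - meanVec P) : ℝ) ^ 2 := by
  rw [varDeriv, varDeriv, ← neg_sub (secondMoment Q), quadForm_neg]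
  simp only [inner_sub_right]
  ring

lemma integrable_of_integrable_norm_sq {E : Type*} [NormedAddCommGroup E] [MeasurableSpace E]
    [OpensMeasurableSpace E] [SecondCountableTopology E] {P : Measure E} [IsFiniteMeasure P]
    (hP : Integrable (fun ξ => ‖ξ‖ ^ 2) P) : Integrable (fun ξ : E => ξ) P :=
  ((memLp_two_iff_integrable_sq_norm aestronglyMeasurable_id).2 hP).integrable one_le_two

lemma integral_mix {n : ℕ} {G : Type*} [NormedAddCommGroup G] [NormedSpace ℝ G]
    {P Q : Measure (EuclideanSpace ℝ (Fin n))} {f : EuclideanSpace ℝ (Fin n) → G}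
    (hP : Integrable f P) (hQ : Integrable f Q) {γ : ℝ} (hγ : γ ∈ Set.Icc (0 : ℝ) 1) :
    ∫ ξ, f ξ ∂(mix P Q γ) = (1 - γ) • ∫ ξ, f ξ ∂P + γ • ∫ ξ, f ξ ∂Q := by
  rw [mix, integral_add_measure (hP.smul_measure ENNReal.ofReal_ne_top)
      (hQ.smul_measure ENNReal.ofReal_ne_top), integral_smul_measure, integral_smul_measure,
    ENNReal.toReal_ofReal (sub_nonneg.2 hγ.2), ENNReal.toReal_ofReal hγ.1]

lemma meanVec_mix_sub {n : ℕ} {P Q : Measure (EuclideanSpace ℝ (Fin n))}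
    (hP : Integrable (fun ξ : EuclideanSpace ℝ (Fin n) => ξ) P)
    (hQ : Integrable (fun ξ : EuclideanSpace ℝ (Fin n) => ξ) Q)
    {γ : ℝ} (hγ : γ ∈ Set.Icc (0 : ℝ) 1) :
    meanVec (mix P Q γ) - meanVec P = γ • (meanVec Q - meanVec P) := by
  rw [meanVec, integral_mix hP hQ hγ, meanVec, meanVec]
  module

lemma norm_le_one_of_mem_simplex {n : ℕ} {x : EuclideanSpace ℝ (Fin n)}
    (hx_nonneg : ∀ i, 0 ≤ x i) (hx_sum : ∑ i, x i = 1) : ‖x‖ ≤ 1 := by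
  have hsq : ‖x‖ ^ 2 ≤ 1 := by
    rw [EuclideanSpace.real_norm_sq_eq, ← one_pow 2, ← hx_sum]
    exact Finset.sum_sq_le_sq_sum_of_nonneg fun i _ => hx_nonneg i
  exact (sq_le_one_iff₀ (norm_nonneg x)).1 hsq

lemma inner_sq_le_of_norm_le_one {F : Type*} [NormedAddCommGroup F] [InnerProductSpace ℝ F]
    {x v : F} {B : ℝ}
    (hx : ‖x‖ ≤ 1) (hv : ‖v‖ ≤ B) : (inner ℝ x v : ℝ) ^ 2 ≤ B ^ 2 := by
  have h : |(inner ℝ x v : ℝ)| ≤ |B| :=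
    calc |(inner ℝ x v : ℝ)| ≤ ‖x‖ * ‖v‖ := abs_real_inner_le_norm x v
      _ ≤ 1 * B := mul_le_mul hx hv (norm_nonneg v) zero_le_one
      _ ≤ |B| := (one_mul B).trans_le (le_abs_self B)
  exact sq_le_sq.2 h

/-- Lemma 6.2(i) (smoothness of the variance risk measure): for `x` in the unit simplex
and `‖μ_Q − μ_P‖₂ ≤ B_μ`,
`D_x(P,P_γ) + D_x(P_γ,P) = 2γ²(xᵀ(μ_Q − μ_P))² ≤ 2γ²B_μ²`. -/
theorem variance_G_smoothness {n : ℕ}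
    (P Q : Measure (EuclideanSpace ℝ (Fin n)))
    [IsProbabilityMeasure P] [IsProbabilityMeasure Q]
    (hP : Integrable (fun ξ => ‖ξ‖ ^ 2) P) (hQ : Integrable (fun ξ => ‖ξ‖ ^ 2) Q)
    (Bμ : ℝ) (hBμ : ‖meanVec Q - meanVec P‖ ≤ Bμ)
    (x : EuclideanSpace ℝ (Fin n)) (hx_nonneg : ∀ i, 0 ≤ x i)
    (hx_sum : ∑ i, x i = 1)
    (γ : ℝ) (hγ : γ ∈ Set.Icc (0 : ℝ) 1) :
    varDeriv x P (mix P Q γ) + varDeriv x (mix P Q γ) P =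
      2 * γ ^ 2 * (inner ℝ x (meanVec Q - meanVec P) : ℝ) ^ 2 ∧
    2 * γ ^ 2 * (inner ℝ x (meanVec Q - meanVec P) : ℝ) ^ 2 ≤ 2 * γ ^ 2 * Bμ ^ 2 := by
  have hmean : meanVec (mix P Q γ) - meanVec P = γ • (meanVec Q - meanVec P) :=
    meanVec_mix_sub (integrable_of_integrable_norm_sq hP) (integrable_of_integrable_norm_sq hQ) hγ
  have hinner : (inner ℝ x (meanVec Q - meanVec P) : ℝ) ^ 2 ≤ Bμ ^ 2 :=
    inner_sq_le_of_norm_le_one (norm_le_one_of_mem_simplex hx_nonneg hx_sum) hBμ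
  refine ⟨?_, by gcongr⟩
  rw [varDeriv_add_varDeriv_swap, hmean, inner_smul_right]
  ring
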